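/- Let (S,·) be an (h,m)-semigroup with a chain of ideals S_0 ⊂ S_1 ⊂ ⋯ ⊂ S_h = S as in the definition, such that S_0 = {0} where 0 is the zero of S, and such that S = E(S) ∪ S_1, where E(S) is the set of idempotents of S. Then for every n ≥ 1, the semigroup (S,·) satisfies the semigroup identity v_{n,m}^{(1)} ≈ (v_{n,m}^{(1)})². -/

import Mathlib

/-
Below the zero `z`, the ideal `S₁` is a Brandt semigroup `B_{G,I}` with zero `z`, and every
element outside `S₁` is idempotent. Let `V` be the value of `v = v_{n,m}^{(1)}`; if `V` is neither
idempotent nor `z`, then `V = (i, g, j)` and `V = (i, 1, i) V`. Multiply `(i, 1, i)` by the letters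
of `v` one at a time: every partial product is a nonzero `(i, g_k, r_k)`. A Brandt letter
`(s, w, t)` forces `r_k = s`, moves the right index to `t` and multiplies `g_k` by `w`; an
idempotent letter leaves the partial product unchanged. Each variable occurs `2m` times in `v`,
so `g = (∏ wₓ)^{2m} = 1`. The right indices follow a walk along the edges `(s, t)` of the Brandt
letters, in the pattern `D U (Dʳᵉᵛ U)^{2m-1}`; walking along both `D` and `Dʳᵉᵛ` forces `D` to
alternate between two indices, which closes the walk, so `j = i`. Hence `V = (i, 1, i)`.
-/

universe u v

/-- `spowM x k = x^(k+1)`, the `(k+1)`-st power in a semigroup. -/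
def spowM {S : Type*} [Mul S] (x : S) : ℕ → S
  | 0 => x
  | k + 1 => spowM x k * x

/-- `opow gmul a k = a^(k+1)` for an explicit binary operation. -/
def opow {G : Type*} (gmul : G → G → G) (a : G) : ℕ → G
  | 0 => a
  | k + 1 => gmul (opow gmul a k) a

/-- The subset `T` is an abelian group of exponent dividing `m` under the semigroup
multiplication. -/
def IsAbGroupExp {S : Type*} [Mul S] (m : ℕ) (T : Set S) : Prop :=
  (∀ a ∈ T, ∀ b ∈ T, a * b ∈ T) ∧ (∀ a ∈ T, ∀ b ∈ T, a * b = b * a) ∧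
    ∃ e ∈ T, (∀ a ∈ T, e * a = a ∧ a * e = a) ∧ (∀ a ∈ T, ∃ b ∈ T, a * b = e) ∧
      ∀ a ∈ T, spowM a (m - 1) = e

/-- The Rees quotient `U/T` is a Brandt semigroup over an abelian group of exponent
dividing `m`: the nonzero classes `U \ T` are in a multiplication-respecting bijection with
`ι × G × ι` for some nonempty `ι` and some abelian group `(G, gmul)` of exponent dividing `m`. -/
def IsBrandtFactor {S : Type u} [Mul S] (m : ℕ) (T U : Set S) : Prop :=
  ∃ (ι : Type u) (G : Type u) (gmul : G → G → G) (ge : G),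
    Nonempty ι ∧
    (∀ a b c : G, gmul (gmul a b) c = gmul a (gmul b c)) ∧
    (∀ a b : G, gmul a b = gmul b a) ∧
    (∀ a : G, gmul ge a = a) ∧
    (∀ a : G, ∃ b : G, gmul a b = ge) ∧
    (∀ a : G, opow gmul a (m - 1) = ge) ∧
    ∃ φ : S → ι × G × ι,
      Set.BijOn φ (U \ T) Set.univ ∧
      ∀ a ∈ U \ T, ∀ b ∈ U \ T,
        ((φ a).2.2 = (φ b).1 →
          a * b ∈ U \ T ∧ φ (a * b) = ((φ a).1, gmul (φ a).2.1 (φ b).2.1, (φ b).2.2)) ∧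
        ((φ a).2.2 ≠ (φ b).1 → a * b ∈ T)

/-- `C 0 ⊂ C 1 ⊂ ⋯ ⊂ C h = S` is a principal chain of ideals witnessing that the semigroup
`S` is an `(h,m)`-semigroup: `C 0` is an abelian group of exponent dividing `m` and each
Rees quotient `C (j+1) / C j` is a Brandt semigroup over such a group. -/
structure IsHMChain {S : Type u} [Semigroup S] (h m : ℕ) (C : ℕ → Set S) : Prop where
  chain : ∀ j < h, C j ⊂ C (j + 1)
  ideal : ∀ j ≤ h, (C j).Nonempty ∧ ∀ a ∈ C j, ∀ s : S, a * s ∈ C j ∧ s * a ∈ C j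
  top : C h = Set.univ
  base : IsAbGroupExp m (C 0)
  factor : ∀ j < h, IsBrandtFactor m (C j) (C (j + 1))

/-- Evaluation of a (nonempty) word, given as a list of variables, in a magma with an
explicit binary operation; the empty word evaluates to `none`. -/
def wEval {ι S : Type*} (mul : S → S → S) (ρ : ι → S) : List ι → Option S
  | [] => none
  | a :: l => some (l.foldl (fun s i => mul s (ρ i)) (ρ a))

/-- The word `u_{n,k,m} = x₁⋯x_{n+k}(xₙ⋯x₁·x_{n+1}⋯x_{n+k})^{2m-1}` (variables 0-indexed). -/
def uWord (n k m : ℕ) : List ℕ :=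
  List.range (n + k) ++
    (List.replicate (2 * m - 1) ((List.range n).reverse ++ List.range' n k)).flatten

/-- The words `v_{n,m}^{(h)}` (`h ≥ 1`), over variables indexed by `h`-tuples from `{0,…,2n-1}`:
`v_{n,m}^{(1)} = u_{n,n,m}`, and `v_{n,m}^{(h+1)}` is obtained by substituting, for the `j`-th
variable of `v_{n,m}^{(1)}`, the copy of `v_{n,m}^{(h)}` whose variables get `j` appended. -/
def vWord (n m : ℕ) : ℕ → List (List ℕ)
  | 0 => []
  | 1 => (uWord n n m).map (fun i => [i])
  | h + 2 => (uWord n n m).flatMap (fun j => (vWord n m (h + 1)).map (fun xs => xs ++ [j]))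

section Walk

variable {ι : Type*}

def IsWalk : ι → List (ι × ι) → ι → Prop
  | a, [], b => b = a
  | a, e :: L, b => a = e.1 ∧ IsWalk e.2 L b

@[simp] theorem isWalk_nil {a b : ι} : IsWalk a [] b ↔ b = a := Iff.rfl

@[simp] theorem isWalk_cons {a b : ι} {e : ι × ι} {L : List (ι × ι)} :
    IsWalk a (e :: L) b ↔ a = e.1 ∧ IsWalk e.2 L b := Iff.rfl

theorem isWalk_append {a b : ι} {L₁ L₂ : List (ι × ι)} :
    IsWalk a (L₁ ++ L₂) b ↔ ∃ c, IsWalk a L₁ c ∧ IsWalk c L₂ b := by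
  induction L₁ generalizing a with
  | nil => simp
  | cons e L ih => simp [ih, and_assoc]

theorem IsWalk.end_unique {a b b' : ι} {L : List (ι × ι)} (h : IsWalk a L b)
    (h' : IsWalk a L b') : b = b' := by
  induction L generalizing a with
  | nil => exact h.trans h'.symm
  | cons e L ih => exact ih h.2 h'.2

theorem IsWalk.start_unique {a a' b b' : ι} {L : List (ι × ι)} (hL : L ≠ []) (h : IsWalk a L b)
    (h' : IsWalk a' L b') : a = a' := by
  cases L with
  | nil => exact absurd rfl hL
  | cons e L => exact h.1.trans h'.1.symm

/-- Walking along `L` and along `L.reverse` forces `L` to alternate between two indices. -/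
theorem IsWalk.reverse_cases {a b c d : ι} {L : List (ι × ι)} (h : IsWalk a L b)
    (h' : IsWalk c L.reverse d) : a = c ∧ b = d ∨ a = b ∧ c = d := by
  induction L generalizing a c d with
  | nil => exact Or.inr ⟨h.symm, h'.symm⟩
  | cons e L ih =>
    obtain ⟨rfl, h⟩ := h
    simp only [List.reverse_cons, isWalk_append, isWalk_cons, isWalk_nil] at h'
    obtain ⟨_, h', rfl, rfl⟩ := h'
    rcases ih h h' with ⟨rfl, rfl⟩ | ⟨rfl, rfl⟩
    · exact Or.inr ⟨rfl, rfl⟩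
    · exact Or.inl ⟨rfl, rfl⟩

theorem IsWalk.eq_of_replicate {a t : ι} {L : List (ι × ι)} (hL : IsWalk a L a) (k : ℕ)
    (h : IsWalk a (List.replicate k L).flatten t) : t = a := by
  induction k with
  | zero => exact h
  | succ k ih =>
    rw [List.replicate_succ, List.flatten_cons, isWalk_append] at h
    obtain ⟨c, hc, h⟩ := h
    obtain rfl := hL.end_unique hc
    exact ih h

theorem IsWalk.eq_of_append_replicate_reverse_append {D U : List (ι × ι)} {k : ℕ} (hk : k ≠ 0)
    {r t : ι} (h : IsWalk r (D ++ U ++ (List.replicate k (D.reverse ++ U)).flatten) t) :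
    t = r := by
  obtain ⟨k, rfl⟩ := Nat.exists_eq_succ_of_ne_zero hk
  simp only [List.replicate_succ, List.flatten_cons, isWalk_append] at h
  obtain ⟨y, ⟨x, hD, hU⟩, y', ⟨w, hD', hU'⟩, hrest⟩ := h
  have hloop : y = r ∧ y' = y := by
    by_cases hU₀ : U = []
    · subst hU₀
      obtain rfl : y = x := hU
      obtain rfl : y' = w := hU'
      rcases hD.reverse_cases hD' with ⟨h₁, h₂⟩ | ⟨h₁, h₂⟩ <;> exact ⟨h₁.symm, h₂.symm⟩
    · obtain rfl := hU.start_unique hU₀ hU'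
      obtain rfl := hU.end_unique hU'
      rcases hD.reverse_cases hD' with ⟨h₁, -⟩ | ⟨h₁, h₂⟩
      · exact ⟨h₁.symm, rfl⟩
      · exact ⟨h₂.trans h₁.symm, rfl⟩
  obtain ⟨rfl, rfl⟩ := hloop
  exact IsWalk.eq_of_replicate (isWalk_append.2 ⟨w, hD', hU'⟩) k hrest

end Walk

theorem uWord_eq (n k m : ℕ) :
    uWord n k m = List.range n ++ List.range' n k ++
      (List.replicate (2 * m - 1) ((List.range n).reverse ++ List.range' n k)).flatten := by
  rw [uWord, List.range_add, List.range'_eq_map_range]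

theorem filterMap_uWord {β : Type*} (f : ℕ → Option β) (n k m : ℕ) :
    (uWord n k m).filterMap f =
      (List.range n).filterMap f ++ (List.range' n k).filterMap f ++
        (List.replicate (2 * m - 1)
          (((List.range n).filterMap f).reverse ++ (List.range' n k).filterMap f)).flatten := by
  simp [uWord_eq, List.filterMap_flatten, List.map_replicate, List.filterMap_reverse]

theorem prod_map_uWord {M : Type*} [CommMonoid M] (f : ℕ → M) (n k : ℕ) {m : ℕ} (hm : m ≠ 0) :
    ((uWord n k m).map f).prod = ((List.range (n + k)).map f).prod ^ (2 * m) := by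
  have hcycle : (((List.range n).reverse ++ List.range' n k).map f).prod =
      ((List.range (n + k)).map f).prod := by
    rw [List.range_add, ← List.range'_eq_map_range]
    simp [List.prod_reverse]
  rw [uWord, List.map_append, List.prod_append, List.map_flatten, List.map_replicate,
    List.prod_flatten, List.map_replicate, List.prod_replicate, hcycle, ← pow_succ']
  congr 1
  omega

theorem opow_mul_eq_pow {M : Type*} [Monoid M] (a : M) (k : ℕ) :
    opow (· * ·) a k = a ^ (k + 1) := by
  induction k with
  | zero => exact (pow_one a).symm
  | succ k ih => rw [opow, ih, pow_succ _ (k + 1)]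

theorem WithOne.coe_foldl_mul {S : Type*} [Semigroup S] (p : S) (xs : List S) :
    ((xs.foldl (· * ·) p : S) : WithOne S) = p * (xs.map ((↑) : S → WithOne S)).prod := by
  induction xs generalizing p with
  | nil => simp
  | cons x xs ih => simp [ih, mul_assoc]

theorem wEval_mul_eq_prod {ι S : Type*} [Semigroup S] (ρ : ι → S) (l : List ι) :
    (wEval (· * ·) ρ l : WithOne S) = (l.map fun i => ((ρ i : S) : WithOne S)).prod := by
  cases l with
  | nil => rfl
  | cons a l =>
    change ((l.foldl (fun s i => s * ρ i) (ρ a) : S) : WithOne S) = _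
    rw [← List.foldl_map, WithOne.coe_foldl_mul, List.map_map, List.map_cons, List.prod_cons]
    rfl

/-- `insert z (Set.range B)` is an ideal of `S`, with zero `z`, whose Rees quotient by `{z}` is
the Brandt semigroup `B_{G,ι}`; `B (i, g, j)` is the element playing `(i, g, j)`. -/
structure IsBrandtIdeal {S ι G : Type*} [Semigroup S] [Group G] (z : S) (B : ι × G × ι → S) :
    Prop where
  zero_mul : ∀ s, z * s = z
  mul_zero : ∀ s, s * z = z
  injective : B.Injective
  ne_zero : ∀ c, B c ≠ z
  mk_mul_mk : ∀ i g j h k, B (i, g, j) * B (j, h, k) = B (i, g * h, k)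
  mk_mul_mk_of_ne : ∀ {j j'} i g h k, j ≠ j' → B (i, g, j) * B (j', h, k) = z
  mul_mem : ∀ s c, s * B c ∈ insert z (Set.range B)
  mem_mul : ∀ c s, B c * s ∈ insert z (Set.range B)

section Brandt

variable {S ι G : Type*} [Semigroup S] [Group G]

/-- Outside the ideal a letter contributes no edge and weight `1`: in a nonzero product it can
only be an idempotent, which fixes the Brandt element it multiplies. -/
noncomputable def indexPair (B : ι × G × ι → S) (x : S) : Option (ι × ι) :=
  (Function.partialInv B x).map fun c => (c.1, c.2.2)

noncomputable def weight (B : ι × G × ι → S) (x : S) : G :=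
  ((Function.partialInv B x).map fun c => c.2.1).getD 1

namespace IsBrandtIdeal

variable {z : S} {B : ι × G × ι → S} (hB : IsBrandtIdeal z B)
include hB

theorem exists_eq_of_mul_mk_ne {s : S} {c : ι × G × ι} (h : s * B c ≠ z) :
    ∃ c', s * B c = B c' := by
  rcases hB.mul_mem s c with h' | ⟨c', h'⟩
  · exact absurd h' h
  · exact ⟨c', h'.symm⟩

theorem exists_eq_of_mk_mul_ne {s : S} {c : ι × G × ι} (h : B c * s ≠ z) :
    ∃ c', B c * s = B c' := by
  rcases hB.mem_mul c s with h' | ⟨c', h'⟩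
  · exact absurd h' h
  · exact ⟨c', h'.symm⟩

theorem eq_of_mk_mul_mk_ne {i j j' k : ι} {g h : G} (hne : B (i, g, j) * B (j', h, k) ≠ z) :
    j = j' := by
  by_contra h'
  exact hne (hB.mk_mul_mk_of_ne i g h k h')

theorem foldl_zero (xs : List S) : xs.foldl (· * ·) z = z := by
  induction xs with
  | nil => rfl
  | cons x xs ih => rw [List.foldl_cons, hB.zero_mul, ih]

theorem mk_mul_self {i j : ι} {g : G} (h : B (i, g, j) * B (i, g, j) = B (i, g, j)) :
    j = i ∧ g = 1 := by
  obtain rfl : j = i := hB.eq_of_mk_mul_mk_ne (h ▸ hB.ne_zero _)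
  rw [hB.mk_mul_mk] at h
  exact ⟨rfl, mul_eq_left.1 (congrArg (fun c => c.2.1) (hB.injective h))⟩

/-- Writing `(j, 1, j) x = (j, h, c)`, one checks `x (c, 1, c) = (j, h, c)` too, which makes
`(j, h, c)` idempotent. -/
theorem mk_one_mul_of_isIdempotentElem {x : S} (hx : IsIdempotentElem x) {j : ι}
    (h : B (j, 1, j) * x ≠ z) : B (j, 1, j) * x = B (j, 1, j) := by
  set u := B (j, 1, j)
  have hu : u * u = u := by rw [hB.mk_mul_mk, mul_one]
  obtain ⟨⟨j₁, h₁, c⟩, hux⟩ := hB.exists_eq_of_mk_mul_ne h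
  obtain rfl : j = j₁ := hB.eq_of_mk_mul_mk_ne (by rw [← hux, ← mul_assoc, hu]; exact h)
  have hxv : x * B (c, 1, c) = u * x := by
    have huxv : u * (x * B (c, 1, c)) = B (j, h₁, c) := by
      rw [← mul_assoc, hux, hB.mk_mul_mk, mul_one]
    have hxv₀ : x * B (c, 1, c) ≠ z := fun h₀ => hB.ne_zero (j, h₁, c) <| by
      rw [← huxv, h₀, hB.mul_zero]
    obtain ⟨⟨j₂, h₂, c₂⟩, hxv⟩ := hB.exists_eq_of_mul_mk_ne hxv₀
    rw [hxv] at huxv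
    obtain rfl : j = j₂ := hB.eq_of_mk_mul_mk_ne (huxv ▸ hB.ne_zero _)
    rw [hB.mk_mul_mk, one_mul] at huxv
    rw [hxv, hux, huxv]
  have hidem : (u * x) * (u * x) = u * x := by
    rw [mul_assoc u x, ← hxv, ← mul_assoc x x, hx.eq, hxv, ← mul_assoc, hu]
  rw [hux] at hidem
  obtain ⟨rfl, rfl⟩ := hB.mk_mul_self hidem
  exact hux

theorem mk_mul_of_isIdempotentElem {x : S} (hx : IsIdempotentElem x) {i j : ι} {g : G}
    (h : B (i, g, j) * x ≠ z) : B (i, g, j) * x = B (i, g, j) := by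
  have hpu : B (i, g, j) * B (j, 1, j) = B (i, g, j) := by rw [hB.mk_mul_mk, mul_one]
  have hux : B (j, 1, j) * x ≠ z := fun h₀ => h <| by rw [← hpu, mul_assoc, h₀, hB.mul_zero]
  rw [← hpu, mul_assoc, hB.mk_one_mul_of_isIdempotentElem hx hux]

theorem foldl_mk_mul (hE : ∀ s : S, IsIdempotentElem s ∨ s ∈ insert z (Set.range B))
    (xs : List S) {i r : ι} {g : G} (h : xs.foldl (· * ·) (B (i, g, r)) ≠ z) :
    ∃ t, IsWalk r (xs.filterMap (indexPair B)) t ∧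
      xs.foldl (· * ·) (B (i, g, r)) = B (i, g * (xs.map (weight B)).prod, t) := by
  induction xs generalizing g r with
  | nil => exact ⟨r, rfl, by simp⟩
  | cons x xs ih =>
    rw [List.foldl_cons] at h ⊢
    have hx : B (i, g, r) * x ≠ z := fun h₀ => h (by rw [h₀, hB.foldl_zero])
    cases hc : Function.partialInv B x with
    | none =>
      have hxE : IsIdempotentElem x := by
        rcases hE x with hxE | rfl | ⟨c, rfl⟩
        · exact hxE
        · exact absurd (hB.mul_zero _) hx
        · simp [Function.partialInv_left hB.injective] at hc
      rw [hB.mk_mul_of_isIdempotentElem hxE hx] at h ⊢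
      simpa [indexPair, weight, hc] using ih h
    | some c =>
      obtain ⟨s, w, t⟩ := c
      obtain rfl : B (s, w, t) = x := (hB.injective.isPartialInv _ _).1 hc
      obtain rfl : r = s := hB.eq_of_mk_mul_mk_ne hx
      rw [hB.mk_mul_mk] at h ⊢
      obtain ⟨t', hw, heq⟩ := ih h
      exact ⟨t', by simpa [indexPair, hc] using hw, by simp [heq, weight, hc, mul_assoc]⟩

end IsBrandtIdeal

end Brandt

theorem IsBrandtIdeal.isIdempotentElem_prod_uWord {S ι G : Type*} [Semigroup S] [CommGroup G]
    {z : S} {B : ι × G × ι → S} (hB : IsBrandtIdeal z B) {m : ℕ} (hm : m ≠ 0)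
    (hexp : ∀ g : G, g ^ m = 1) (hE : ∀ s : S, IsIdempotentElem s ∨ s ∈ insert z (Set.range B))
    (n k : ℕ) (a : ℕ → S) :
    IsIdempotentElem ((uWord n k m).map fun i => (a i : WithOne S)).prod := by
  rw [show (fun i => (a i : WithOne S)) = (↑) ∘ a from rfl, ← List.map_map]
  generalize hP : (((uWord n k m).map a).map ((↑) : S → WithOne S)).prod = P
  rcases eq_or_ne P 1 with rfl | hP₁
  · exact IsIdempotentElem.one
  obtain ⟨V, rfl⟩ := WithOne.ne_one_iff_exists.1 hP₁
  suffices hV : V * V = V by rw [IsIdempotentElem, ← WithOne.coe_mul, hV]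
  rcases hE V with hV | rfl | ⟨⟨i, g, j⟩, rfl⟩
  · exact hV
  · exact hB.zero_mul _
  have hfold : ((uWord n k m).map a).foldl (· * ·) (B (i, 1, i)) = B (i, g, j) :=
    WithOne.coe_injective <| by
      rw [WithOne.coe_foldl_mul, hP, ← WithOne.coe_mul, hB.mk_mul_mk, one_mul]
  obtain ⟨t, hwalk, heq⟩ := hB.foldl_mk_mul hE _ (hfold ▸ hB.ne_zero _)
  have hti : t = i := by
    rw [List.filterMap_map, filterMap_uWord] at hwalk
    exact hwalk.eq_of_append_replicate_reverse_append (by omega)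
  have hW : (((uWord n k m).map a).map (weight B)).prod = 1 := by
    rw [List.map_map, prod_map_uWord _ _ _ hm, pow_mul, hexp]
  rw [hfold, hW, hti, mul_one] at heq
  rw [heq, hB.mk_mul_mk, one_mul]

noncomputable abbrev commGroupOfExistsInv {G : Type*} (mul : G → G → G) (one : G)
    (mul_assoc : ∀ a b c, mul (mul a b) c = mul a (mul b c)) (mul_comm : ∀ a b, mul a b = mul b a)
    (one_mul : ∀ a, mul one a = a) (exists_inv : ∀ a, ∃ b, mul a b = one) : CommGroup G where
  mul := mul
  one := one
  inv a := (exists_inv a).choose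
  mul_assoc := mul_assoc
  one_mul := one_mul
  mul_one a := (mul_comm a one).trans (one_mul a)
  inv_mul_cancel a := (mul_comm _ a).trans (exists_inv a).choose_spec
  mul_comm := mul_comm

theorem IsBrandtFactor.exists_isBrandtIdeal {S : Type u} [Semigroup S] {m : ℕ} {z : S}
    {U : Set S} (hF : IsBrandtFactor m {z} U) (hU : ∀ a ∈ U, ∀ s : S, a * s ∈ U ∧ s * a ∈ U)
    (hz : ∀ s : S, z * s = z ∧ s * z = z) :
    ∃ (ι G : Type u) (_ : CommGroup G) (B : ι × G × ι → S),
      IsBrandtIdeal z B ∧ (∀ g : G, g ^ m = 1) ∧ U ⊆ insert z (Set.range B) := by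
  obtain ⟨ι, G, mul, one, -, assoc, comm, one_mul, inv, hexp, φ, hφ, hlaw⟩ := hF
  let : CommGroup G := commGroupOfExistsInv mul one assoc comm one_mul inv
  have : Nonempty S := ⟨z⟩
  set B := Function.invFunOn φ (U \ {z})
  have hB : ∀ c, B c ∈ U \ {z} := fun c => hφ.surjOn.mapsTo_invFunOn (Set.mem_univ c)
  have hφB : ∀ c, φ (B c) = c := fun c => hφ.surjOn.rightInvOn_invFunOn (Set.mem_univ c)
  have hBφ : ∀ p ∈ U \ {z}, B (φ p) = p := fun p hp => hφ.invOn_invFunOn.1 hp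
  have hsub : U ⊆ insert z (Set.range B) := fun p hp => by
    by_cases hpz : p = z
    · exact Or.inl hpz
    · exact Or.inr ⟨φ p, hBφ p ⟨hp, hpz⟩⟩
  refine ⟨ι, G, inferInstance, B, ⟨fun s => (hz s).1, fun s => (hz s).2,
    Function.LeftInverse.injective hφB, fun c => (hB c).2, fun i g j h k => ?_,
    fun i g h k hne => (hlaw _ (hB _) _ (hB _)).2 (by rwa [hφB, hφB]),
    fun s c => hsub (hU _ (hB c).1 s).2, fun c s => hsub (hU _ (hB c).1 s).1⟩, fun g => ?_, hsub⟩
  · obtain ⟨hmem, hφmul⟩ := (hlaw _ (hB (i, g, j)) _ (hB (j, h, k))).1 (by rw [hφB, hφB])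
    rw [← hBφ _ hmem, hφmul, hφB, hφB]
    rfl
  · cases m with
    | zero => exact pow_zero g
    | succ m => exact (opow_mul_eq_pow g m).symm.trans (hexp g)

/-- Let `S` be an `(h,m)`-semigroup with chain of ideals `C` such that
`C 0 = {z}` with `z` the zero of `S` and every element of `S` is an idempotent or lies in
`C 1`. Then for every `n ≥ 1`, `S` satisfies `v_{n,m}^{(1)} ≈ (v_{n,m}^{(1)})²`. -/
theorem hm_semigroup_satisfies_v1_identity {S : Type u} [Semigroup S] (h m : ℕ)
    (hh : 1 ≤ h) (hm : 1 ≤ m) (C : ℕ → Set S) (hchain : IsHMChain h m C)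
    (z : S) (hz : C 0 = {z}) (hzero : ∀ s : S, z * s = z ∧ s * z = z)
    (hES : ∀ s : S, s * s = s ∨ s ∈ C 1) :
    ∀ n, 1 ≤ n → ∀ ρ : List ℕ → S,
      wEval (· * ·) ρ (vWord n m 1) = wEval (· * ·) ρ (vWord n m 1 ++ vWord n m 1) := by
  intro n _ ρ
  have hF : IsBrandtFactor m {z} (C 1) := hz ▸ hchain.factor 0 hh
  obtain ⟨ι, G, _, B, hB, hexp, hC₁⟩ := hF.exists_isBrandtIdeal (hchain.ideal 1 hh).2 hzero
  have hP := hB.isIdempotentElem_prod_uWord (by omega) hexp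
    (fun s => (hES s).imp_right fun hs => hC₁ hs) n n fun i => ρ [i]
  simp only [vWord, wEval_mul_eq_prod, List.map_append, List.prod_append, List.map_map]
  exact hP.symm
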